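/- arXiv:1607.07134 — 2 statements merged into one kernel-verified Lean document; each statement's English description precedes it below -/
import Mathlib

section
/- For all t, s ∈ ℝ one has ρ(γ₁(t), γ₂(s)) = arcosh(A(t,s)/(4 r e^{s+t})) = φ(t,s); in particular A(t,s) ≥ 4 r e^{s+t} for all t, s ∈ ℝ. -/
open Real

noncomputable section

/-- Inverse hyperbolic cosine. -/
def arcosh (x : ℝ) : ℝ := Real.log (x + Real.sqrt (x ^ 2 - 1))

/-- Hyperbolic distance in the upper half-space model of `H³`. -/
def rho (p q : ℝ × ℝ × ℝ) : ℝ :=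
  _root_.arcosh (1 +
    ((q.1 - p.1) ^ 2 + (q.2.1 - p.2.1) ^ 2 + (q.2.2 - p.2.2) ^ 2) / (2 * p.2.2 * q.2.2))

/-- The vertical geodesic `γ₁(t) = (0,0,eᵗ)`. -/
def gamma1 (t : ℝ) : ℝ × ℝ × ℝ := (0, 0, Real.exp t)

/-- The half-circle geodesic `γ₂`. -/
def gamma2 (a r β s : ℝ) : ℝ × ℝ × ℝ :=
  (a + r * Real.cos β * (1 - Real.exp (2 * s)) / (1 + Real.exp (2 * s)),
   r * Real.sin β * (1 - Real.exp (2 * s)) / (1 + Real.exp (2 * s)),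
   2 * r * Real.exp s / (1 + Real.exp (2 * s)))

/-- `d₁ = √(a² + r² − 2ar cos β)`. -/
def d1 (a r β : ℝ) : ℝ := Real.sqrt (a ^ 2 + r ^ 2 - 2 * a * r * Real.cos β)

/-- `d₂ = √(a² + r² + 2ar cos β)`. -/
def d2 (a r β : ℝ) : ℝ := Real.sqrt (a ^ 2 + r ^ 2 + 2 * a * r * Real.cos β)

/-- `A(t,s) = e^{2s+2t} + e^{2t} + d₁² e^{2s} + d₂²`. -/
def Afun (a r β t s : ℝ) : ℝ :=
  Real.exp (2 * s + 2 * t) + Real.exp (2 * t) + d1 a r β ^ 2 * Real.exp (2 * s) +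
    d2 a r β ^ 2

/-!
The distance formula `cosh ρ(p, q) = 1 + |p - q|² / (2 z_p z_q)` is evaluated along the two
curves. Writing `u = eˢ`, `v = eᵗ`, the point `γ₂(s)` has height `2ru / (1 + u²)`, and after
clearing denominators the identity `|γ₁(t) - γ₂(s)|² (1 + u²) = u²v² + v² + d₁²u² + d₂² - 4ruv`
is the law of cosines `d₁,₂² = a² + r² ∓ 2ar cos β` together with `sin² β + cos² β = 1`.
Since the left-hand side of the distance formula is at least `1`, so is `A / (4 r u v)`.
-/

def coshRho (p q : ℝ × ℝ × ℝ) : ℝ :=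
  1 + ((q.1 - p.1) ^ 2 + (q.2.1 - p.2.1) ^ 2 + (q.2.2 - p.2.2) ^ 2) / (2 * p.2.2 * q.2.2)

theorem rho_eq_arcosh_coshRho (p q : ℝ × ℝ × ℝ) : rho p q = _root_.arcosh (coshRho p q) := rfl

theorem one_le_coshRho {p q : ℝ × ℝ × ℝ} (hp : 0 ≤ p.2.2) (hq : 0 ≤ q.2.2) :
    1 ≤ coshRho p q :=
  le_add_of_nonneg_right (by positivity)

theorem sq_d1 (a r β : ℝ) : d1 a r β ^ 2 = a ^ 2 + r ^ 2 - 2 * a * r * Real.cos β := by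
  refine Real.sq_sqrt ?_
  nlinarith [sq_nonneg (a - r * Real.cos β), sq_nonneg (r * Real.sin β), Real.sin_sq_add_cos_sq β]

theorem sq_d2 (a r β : ℝ) : d2 a r β ^ 2 = a ^ 2 + r ^ 2 + 2 * a * r * Real.cos β := by
  refine Real.sq_sqrt ?_
  nlinarith [sq_nonneg (a + r * Real.cos β), sq_nonneg (r * Real.sin β), Real.sin_sq_add_cos_sq β]

theorem gamma1_height_pos (t : ℝ) : 0 < (gamma1 t).2.2 := Real.exp_pos t

theorem gamma2_height_pos {r : ℝ} (hr : 0 < r) (a β s : ℝ) : 0 < (gamma2 a r β s).2.2 := by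
  unfold gamma2; positivity

theorem coshRho_gamma1_gamma2 (a β t s : ℝ) {r : ℝ} (hr : r ≠ 0) :
    coshRho (gamma1 t) (gamma2 a r β s) = Afun a r β t s / (4 * r * Real.exp (s + t)) := by
  have exp_two_mul (x : ℝ) : Real.exp (2 * x) = Real.exp x ^ 2 := by
    rw [two_mul, Real.exp_add, sq]
  have hu : 1 + Real.exp s ^ 2 ≠ 0 := by positivity
  simp only [coshRho, gamma1, gamma2, Afun, sq_d1, sq_d2, Real.exp_add, exp_two_mul]
  field_simp
  linear_combination (4 * r ^ 2 * (1 - Real.exp s ^ 2) ^ 2) * Real.sin_sq_add_cos_sq β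

theorem dist_gamma1_gamma2_general (a r β : ℝ) (hr : 0 < r) :
    ∀ t s : ℝ,
      rho (gamma1 t) (gamma2 a r β s) =
        _root_.arcosh (Afun a r β t s / (4 * r * Real.exp (s + t))) ∧
      4 * r * Real.exp (s + t) ≤ Afun a r β t s := by
  intro t s
  have hcosh := coshRho_gamma1_gamma2 a β t s hr.ne'
  refine ⟨by rw [rho_eq_arcosh_coshRho, hcosh], ?_⟩
  have hone : 1 ≤ Afun a r β t s / (4 * r * Real.exp (s + t)) :=
    hcosh ▸ one_le_coshRho (gamma1_height_pos t).le (gamma2_height_pos hr a β s).le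
  rwa [one_le_div (by positivity)] at hone

/-- `ρ(γ₁(t), γ₂(s)) = arcosh(A(t,s)/(4 r e^{s+t}))`, and `A(t,s) ≥ 4 r e^{s+t}`. -/
theorem dist_gamma1_gamma2 (a r β : ℝ) (ha : 0 ≤ a) (hr : 0 < r)
    (hβ : β ∈ Set.Ioc 0 (π / 2)) :
    ∀ t s : ℝ,
      rho (gamma1 t) (gamma2 a r β s) =
        _root_.arcosh (Afun a r β t s / (4 * r * Real.exp (s + t))) ∧
      4 * r * Real.exp (s + t) ≤ Afun a r β t s :=
  dist_gamma1_gamma2_general a r β hr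

end
end

section
/- Let R > 0. For every s ∈ ℝ, the hyperbolic distance from γ₂(s) to the z-axis satisfies inf_{t∈ℝ} ρ(γ₂(s), (0,0,e^t)) ≤ R if and only if d₁² e^{4s} + 2(a² + r² − 2(cosh R)² r²) e^{2s} + d₂² ≤ 0. -/
open Real

noncomputable section

lemma arcosh_le_iff {x R : ℝ} (hx : 1 ≤ x) (hR : 0 ≤ R) :
    _root_.arcosh x ≤ R ↔ x ≤ Real.cosh R := by
  have hs0 : 0 ≤ Real.sqrt (x ^ 2 - 1) := Real.sqrt_nonneg _
  have hs2 : Real.sqrt (x ^ 2 - 1) ^ 2 = x ^ 2 - 1 := Real.sq_sqrt (by nlinarith)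
  have hpos : 0 < x + Real.sqrt (x ^ 2 - 1) := by linarith
  rw [_root_.arcosh, Real.log_le_iff_le_exp hpos, Real.cosh_eq]
  constructor
  · intro h
    have hiu : Real.exp (-R) * Real.exp R = 1 := by
      rw [← Real.exp_add]; simp
    nlinarith [sq_nonneg (Real.exp R - x), Real.exp_pos R, Real.exp_pos (-R)]
  · intro h
    have h2 : 0 ≤ Real.sinh R := by
      rw [Real.sinh_eq]
      have := Real.exp_le_exp.mpr (neg_le_self hR)
      linarith
    have hsinh : Real.sqrt (x ^ 2 - 1) ≤ Real.sinh R := by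
      have h1 : Real.sinh R ^ 2 = Real.cosh R ^ 2 - 1 := by
        nlinarith [Real.cosh_sq_sub_sinh_sq R]
      have h3 : 0 < Real.cosh R := Real.cosh_pos R
      have hxc : x ≤ Real.cosh R := by rw [Real.cosh_eq]; exact h
      have h4 : x ^ 2 - 1 ≤ Real.sinh R ^ 2 := by nlinarith
      calc Real.sqrt (x ^ 2 - 1) ≤ Real.sqrt (Real.sinh R ^ 2) := Real.sqrt_le_sqrt h4
        _ = Real.sinh R := by rw [Real.sqrt_sq h2]
    have := Real.sinh_add_cosh R
    rw [Real.cosh_eq] at *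
    linarith

lemma arcosh_le_arcosh {x y : ℝ} (hx : 1 ≤ x) (hxy : x ≤ y) :
    _root_.arcosh x ≤ _root_.arcosh y := by
  have hpos : 0 < x + Real.sqrt (x ^ 2 - 1) := by
    have := Real.sqrt_nonneg (x ^ 2 - 1); linarith
  apply Real.log_le_log hpos
  have : Real.sqrt (x ^ 2 - 1) ≤ Real.sqrt (y ^ 2 - 1) :=
    Real.sqrt_le_sqrt (by nlinarith)
  linarith

set_option maxHeartbeats 1000000 in
/-- The point `γ₂(s)` lies within hyperbolic distance `R` of the `z`-axis iff
`d₁² e^{4s} + 2(a² + r² − 2 cosh²R r²) e^{2s} + d₂² ≤ 0`. -/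
theorem gamma2_in_tube_iff (a r β R : ℝ) (ha : 0 ≤ a) (hr : 0 < r)
    (hβ : β ∈ Set.Ioc 0 (π / 2)) (hR : 0 < R) :
    ∀ s : ℝ,
      (⨅ t : ℝ, rho (gamma2 a r β s) (0, 0, Real.exp t)) ≤ R ↔
        d1 a r β ^ 2 * Real.exp (4 * s) +
            2 * (a ^ 2 + r ^ 2 - 2 * Real.cosh R ^ 2 * r ^ 2) * Real.exp (2 * s) +
            d2 a r β ^ 2 ≤ 0 := by
  intro s
  obtain ⟨hβ0, hβ2⟩ := hβ
  have hc0 : 0 ≤ Real.cos β := Real.cos_nonneg_of_mem_Icc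
    ⟨by linarith [Real.pi_pos], hβ2⟩
  have hc1 : Real.cos β ≤ 1 := Real.cos_le_one β
  set c := Real.cos β with hc
  set q := Real.exp (2 * s) with hqdef
  have hq0 : 0 < q := Real.exp_pos _
  have hq1 : 0 < 1 + q := by linarith
  have hqe : q = Real.exp s ^ 2 := by
    rw [hqdef, two_mul, Real.exp_add]; ring
  have hq4 : Real.exp (4 * s) = q ^ 2 := by
    rw [hqdef, ← Real.exp_nat_mul]
    · norm_num; ring_nf
  set z := 2 * r * Real.exp s / (1 + q) with hzdef
  have hz : 0 < z := by
    apply div_pos _ hq1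
    positivity
  set D2 := a ^ 2 + r ^ 2 + 2 * a * r * c * (1 - q) / (1 + q) with hD2def
  -- numerator positivity fact: D2 - z^2 ≥ 0
  have hnum : 0 ≤ a ^ 2 * (1 + q) ^ 2 + r ^ 2 * (1 - q) ^ 2 - 2 * a * r * c * (q ^ 2 - 1) := by
    rcases le_or_gt q 1 with h | h
    · have : 0 ≤ 2 * a * r * c * (1 - q ^ 2) := by
        apply mul_nonneg (by positivity)
        nlinarith
      nlinarith
    · nlinarith [sq_nonneg (a * (1 + q) - r * (q - 1)),
        mul_nonneg (mul_nonneg (mul_nonneg ha hr.le) hc0) (le_of_lt (by nlinarith : (0:ℝ) < (q-1)*(q+1))),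
        mul_nonneg (mul_nonneg ha hr.le) (sub_nonneg.mpr hc1)]
  have expand : (a ^ 2 + r ^ 2 + 2 * a * r * c * (1 - q) / (1 + q)) * (1 + q) ^ 2
      = a ^ 2 * (1 + q) ^ 2 + r ^ 2 * (1 - q) ^ 2 - 2 * a * r * c * (q ^ 2 - 1)
        + 4 * r ^ 2 * q := by
    field_simp
    ring
  have hzD : z ^ 2 ≤ D2 := by
    rw [hzdef, hD2def, div_pow, div_le_iff₀ (by positivity)]
    have e2 : (2 * r * Real.exp s) ^ 2 = 4 * r ^ 2 * q := by rw [hqe]; ring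
    rw [e2, expand]
    nlinarith
  have hD2pos : 0 < D2 := lt_of_lt_of_le (by positivity) hzD
  set D := Real.sqrt D2 with hDdef
  have hDsq : D ^ 2 = D2 := Real.sq_sqrt hD2pos.le
  have hDpos : 0 < D := Real.sqrt_pos.mpr hD2pos
  have hzD' : z ≤ D := by
    have h := Real.sqrt_le_sqrt hzD
    rwa [Real.sqrt_sq hz.le] at h
  have hDz1 : 1 ≤ D / z := (one_le_div hz).mpr hzD'
  clear_value c q z D2 D
  -- formula for each term
  have hterm : ∀ t : ℝ, rho (gamma2 a r β s) (0, 0, Real.exp t)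
      = _root_.arcosh ((D2 + Real.exp t ^ 2) / (2 * z * Real.exp t)) := by
    intro t
    have het : 0 < Real.exp t := Real.exp_pos t
    have hsin2 : Real.sin β ^ 2 = 1 - c ^ 2 := by
      rw [hc]; have := Real.sin_sq_add_cos_sq β; linarith
    simp only [rho, gamma2]
    congr 1
    rw [hD2def, hzdef, ← hc, ← hqdef, hqe]
    have h1 : (0:ℝ) < 1 + Real.exp s ^ 2 := by positivity
    field_simp
    linear_combination (r ^ 2 * (1 - Real.exp s ^ 2) ^ 2) * hsin2
  have hglb : ∀ t : ℝ, _root_.arcosh (D / z) ≤ rho (gamma2 a r β s) (0, 0, Real.exp t) := by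
    intro t
    rw [hterm t]
    apply _root_.arcosh_le_arcosh hDz1
    rw [div_le_div_iff₀ hz (by positivity), ← hDsq]
    nlinarith [mul_nonneg hz.le (sq_nonneg (D - Real.exp t))]
  have hbdd : BddBelow (Set.range fun t => rho (gamma2 a r β s) (0, 0, Real.exp t)) := by
    refine ⟨_root_.arcosh (D / z), ?_⟩
    rintro _ ⟨t, rfl⟩
    exact hglb t
  have hattain : rho (gamma2 a r β s) (0, 0, Real.exp (Real.log D)) = _root_.arcosh (D / z) := by
    rw [hterm, Real.exp_log hDpos]
    congr 1
    rw [← hDsq]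
    field_simp
    ring
  have hc2 : (0:ℝ) ≤ 1 - c ^ 2 := by nlinarith
  have hd1sq : d1 a r β ^ 2 = a ^ 2 + r ^ 2 - 2 * a * r * c := by
    rw [d1, ← hc]
    refine Real.sq_sqrt ?_
    nlinarith [sq_nonneg (a - r * c), mul_nonneg (sq_nonneg r) hc2]
  have hd2sq : d2 a r β ^ 2 = a ^ 2 + r ^ 2 + 2 * a * r * c := by
    rw [d2, ← hc]
    refine Real.sq_sqrt ?_
    nlinarith [mul_nonneg (mul_nonneg ha hr.le) hc0]
  have hpoly : d1 a r β ^ 2 * q ^ 2 +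
      2 * (a ^ 2 + r ^ 2 - 2 * Real.cosh R ^ 2 * r ^ 2) * q + d2 a r β ^ 2
      = (D2 - Real.cosh R ^ 2 * z ^ 2) * (1 + q) ^ 2 := by
    rw [hd1sq, hd2sq, hD2def, hzdef, hqe]
    have h1 : (0:ℝ) < 1 + Real.exp s ^ 2 := by positivity
    field_simp
    ring
  have hfac : (D2 - Real.cosh R ^ 2 * z ^ 2) * (1 + q) ^ 2 ≤ 0 ↔
      D2 ≤ Real.cosh R ^ 2 * z ^ 2 := by
    constructor
    · intro h; nlinarith [mul_pos hq1 hq1]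
    · intro h; nlinarith [mul_pos hq1 hq1]
  have hcosh : 0 < Real.cosh R := Real.cosh_pos R
  have hDiff : D2 ≤ Real.cosh R ^ 2 * z ^ 2 ↔ D / z ≤ Real.cosh R := by
    constructor
    · intro h
      rw [div_le_iff₀ hz]
      have h2 := Real.sqrt_le_sqrt h
      rwa [← hDdef, show Real.cosh R ^ 2 * z ^ 2 = (Real.cosh R * z) ^ 2 by ring,
        Real.sqrt_sq (by positivity)] at h2
    · intro h
      rw [div_le_iff₀ hz] at h
      nlinarith
  rw [hq4, hpoly, hfac, hDiff]
  constructor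
  · intro h
    exact (_root_.arcosh_le_iff hDz1 hR.le).mp (le_trans (le_ciInf hglb) h)
  · intro h
    calc (⨅ t : ℝ, rho (gamma2 a r β s) (0, 0, Real.exp t))
        ≤ rho (gamma2 a r β s) (0, 0, Real.exp (Real.log D)) := ciInf_le hbdd (Real.log D)
      _ = _root_.arcosh (D / z) := hattain
      _ ≤ R := (_root_.arcosh_le_iff hDz1 hR.le).mpr h

end
end
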